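/- For every integer n > 0, the sum over all weakly decreasing tuples (λ₁, λ₂, ..., λₙ) of nonnegative integers with λ₁ + λ₂ + ... + λₙ = n of the rational quantity (−1)^(1+λ₁) · C(λ₁,λ₂)·C(λ₂,λ₃)···C(λₙ,0) · (n/λ₁) · ∏_{i=1}^{n} ((2i−1)/i)^{λᵢ} equals 2^(n-1). -/

import Mathlib

/-!
Put `wᵢ = (2i+1)/(i+1)`. Grouping the tuples by their first entry `j`, the inner sums are,
by repeated binomial expansion, the coefficients `[Xⁿ] Vʲ` of the powers of the nested series
`V = w₀X(1 + w₁X(1 + w₂X(1 + ⋯)))`. Up to degree `n`, `1 + V` agrees with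
`A = ∑ᵣ w₀⋯w_{r-1} Xʳ = ∑ᵣ C(2r,r)/2ʳ Xʳ = (1 - 2X)^(-1/2)`, so the sum is
`n [Xⁿ] log A = n [Xⁿ] (-½ log (1 - 2X)) = 2ⁿ⁻¹`. Formally, `log A` enters only through its
derivative `A'/A = 1/(1 - 2X)`, which is the differential equation `(1 - 2X) A' = A`.
-/

open Finset

/-- Weakly decreasing tuples `(λ₁,…,λₙ)` of nonnegative integers with `λ₁+⋯+λₙ = n`. -/
def partitionTuples (n : ℕ) : Finset (Fin n → ℕ) :=
  (Finset.Nat.antidiagonalTuple n n).filter fun t => ∀ i j : Fin n, i ≤ j → t j ≤ t i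

/-- The product `C(λ₁,λ₂)·C(λ₂,λ₃)⋯C(λₙ,0)` with the convention `λ_{n+1} = 0`. -/
def binomProd (n : ℕ) (t : Fin n → ℕ) : ℕ :=
  ∏ i : Fin n, Nat.choose (t i) (if h : (i : ℕ) + 1 < n then t ⟨(i : ℕ) + 1, h⟩ else 0)

theorem Finset.Nat.sum_antidiagonalTuple_succ {M : Type*} [AddCommMonoid M] (d s : ℕ)
    (F : (Fin (d + 1) → ℕ) → M) :
    ∑ t ∈ Nat.antidiagonalTuple (d + 1) s, F t
      = ∑ p ∈ antidiagonal s, ∑ u ∈ Nat.antidiagonalTuple d p.2, F (Fin.cons p.1 u) := by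
  rw [sum_sigma']
  refine sum_bij' (fun t _ => ⟨(t 0, ∑ i, Fin.tail t i), Fin.tail t⟩)
    (fun x _ => Fin.cons x.1.1 x.2) ?_ ?_ (fun t _ => Fin.cons_self_tail t) ?_
    (fun t _ => by rw [Fin.cons_self_tail])
  · intro t ht
    simp only [mem_sigma, HasAntidiagonal.mem_antidiagonal, Nat.mem_antidiagonalTuple,
      and_true] at ht ⊢
    rw [← ht, Fin.sum_univ_succ]
    rfl
  · intro x hx
    simp only [mem_sigma, HasAntidiagonal.mem_antidiagonal, Nat.mem_antidiagonalTuple] at hx ⊢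
    rw [Fin.sum_cons, hx.2, hx.1]
  · intro x hx
    simp only [mem_sigma, HasAntidiagonal.mem_antidiagonal, Nat.mem_antidiagonalTuple] at hx
    ext <;> simp [hx.2]

theorem Finset.sum_range_eq_sum_range_of_eq_zero {M : Type*} [AddCommMonoid M] {f : ℕ → M}
    {a b : ℕ} (ha : ∀ j, a ≤ j → f j = 0) (hb : ∀ j, b ≤ j → f j = 0) :
    ∑ j ∈ range a, f j = ∑ j ∈ range b, f j := by
  wlog hab : a ≤ b generalizing a b
  · exact (this hb ha (le_of_not_ge hab)).symm
  exact sum_subset (range_subset_range.2 hab) fun j _ hj => ha j (by simpa using hj)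

theorem Fin.prod_pow_cons {M : Type*} [CommMonoid M] (w : ℕ → M) (d j : ℕ) (u : Fin d → ℕ) :
    ∏ i : Fin (d + 1), w i ^ (Fin.cons j u : Fin (d + 1) → ℕ) i
      = w 0 ^ j * ∏ i : Fin d, w (i + 1) ^ u i := by
  rw [Fin.prod_univ_succ]
  simp

theorem binomProd_one (t : Fin 1 → ℕ) : binomProd 1 t = 1 := by
  simp [binomProd]

theorem binomProd_cons (d k : ℕ) (t : Fin (d + 1) → ℕ) :
    binomProd (d + 2) (Fin.cons k t) = k.choose (t 0) * binomProd (d + 1) t := by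
  unfold binomProd
  rw [Fin.prod_univ_succ]
  congr 1
  refine prod_congr rfl fun i _ => ?_
  by_cases h : (i : ℕ) + 1 < d + 1
  · rw [dif_pos (by simpa using h), dif_pos h]
    rfl
  · rw [dif_neg (by simpa using h), dif_neg h]
    rfl

theorem antitone_of_binomProd_ne_zero {n : ℕ} {t : Fin n → ℕ} (h : binomProd n t ≠ 0) :
    Antitone t := by
  cases n with
  | zero => exact fun i => i.elim0
  | succ m =>
    refine Fin.antitone_iff_succ_le.2 fun i => ?_
    have hi := prod_ne_zero_iff.1 h i.castSucc (mem_univ _)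
    rw [dif_pos (by simp)] at hi
    exact not_lt.1 fun hlt => hi (Nat.choose_eq_zero_of_lt hlt)

namespace PowerSeries

section CommSemiring

variable {R : Type*} [CommSemiring R]

/-- `nestedSeries d w = 1 + w₀X(1 + w₁X(1 + ⋯ (1 + w_{d-1}X)))`. -/
noncomputable def nestedSeries : ℕ → (ℕ → R) → R⟦X⟧
  | 0, _ => 1
  | d + 1, w => 1 + C (w 0) * X * nestedSeries d (fun i => w (i + 1))

theorem coeff_pow_C_mul_X_mul (a : R) (f : R⟦X⟧) (j s : ℕ) :
    coeff s ((C a * X * f) ^ j) = if j ≤ s then a ^ j * coeff (s - j) (f ^ j) else 0 := by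
  rw [mul_pow, mul_pow, ← map_pow, mul_assoc, coeff_C_mul, coeff_X_pow_mul', mul_ite, mul_zero]

/-- Expanding `(1 + w₀X N)ᵏ` binomially picks `t₀` of the `k` factors, then expanding `N^t₀`
picks `t₁` of those, and so on: this is where the binomial product comes from. -/
theorem coeff_nestedSeries_pow (d : ℕ) (w : ℕ → R) (k s : ℕ) :
    coeff s (nestedSeries d w ^ k) = ∑ t ∈ Nat.antidiagonalTuple d s,
      (binomProd (d + 1) (Fin.cons k t) : R) * ∏ i : Fin d, w i ^ t i := by
  induction d generalizing w k s with
  | zero => cases s <;> simp [nestedSeries, binomProd_one, coeff_one]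
  | succ d ih =>
    set Y := C (w 0) * X * nestedSeries d (fun i => w (i + 1))
    calc coeff s (nestedSeries (d + 1) w ^ k)
        = ∑ j ∈ range (k + 1), coeff s (Y ^ j) * k.choose j := by
          rw [nestedSeries, add_comm, add_pow, map_sum]
          refine sum_congr rfl fun j _ => ?_
          rw [one_pow, mul_one, ← map_natCast C, coeff_mul_C]
      _ = ∑ j ∈ range (s + 1), coeff s (Y ^ j) * k.choose j :=
          sum_range_eq_sum_range_of_eq_zero
            (fun j hj => by rw [Nat.choose_eq_zero_of_lt (by omega), Nat.cast_zero, mul_zero])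
            (fun j hj => by rw [coeff_pow_C_mul_X_mul, if_neg (by omega), zero_mul])
      _ = ∑ j ∈ range (s + 1), ∑ u ∈ Nat.antidiagonalTuple d (s - j),
            (binomProd (d + 2) (Fin.cons k (Fin.cons j u)) : R)
              * ∏ i : Fin (d + 1), w i ^ (Fin.cons j u : Fin (d + 1) → ℕ) i := by
          refine sum_congr rfl fun j hj => ?_
          rw [coeff_pow_C_mul_X_mul, if_pos (Nat.lt_succ_iff.1 (mem_range.1 hj)), ih, mul_sum,
            sum_mul]
          refine sum_congr rfl fun u _ => ?_
          rw [binomProd_cons, Fin.cons_zero, Fin.prod_pow_cons]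
          push_cast
          ring
      _ = _ := by
          rw [Nat.sum_antidiagonalTuple_succ, Nat.sum_antidiagonal_eq_sum_range_succ_mk]

theorem coeff_pow_succ_mul (B : R⟦X⟧) (i M : ℕ) :
    coeff (M + 1) (B ^ (i + 1)) * (M + 1) = (i + 1) * coeff M (B ^ i * d⁄dX R B) := by
  rw [← coeff_derivative, derivative_pow, add_tsub_cancel_right, mul_assoc, ← map_natCast C,
    coeff_C_mul]
  push_cast
  rfl

end CommSemiring

section CommRing

variable {R : Type*} [CommRing R]

def prodSeries (w : ℕ → R) : R⟦X⟧ := mk fun r => ∏ i ∈ range r, w i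

theorem prodSeries_eq (w : ℕ → R) :
    prodSeries w = 1 + C (w 0) * X * prodSeries (fun i => w (i + 1)) := by
  ext (_ | r)
  · simp [prodSeries]
  · rw [map_add, mul_assoc, coeff_C_mul, coeff_succ_X_mul]
    simp [prodSeries, prod_range_succ', coeff_one, mul_comm]

theorem X_pow_dvd_prodSeries_sub_nestedSeries (d : ℕ) (w : ℕ → R) :
    X ^ (d + 1) ∣ prodSeries w - nestedSeries d w := by
  induction d generalizing w with
  | zero =>
    rw [prodSeries_eq, nestedSeries, add_sub_cancel_left, pow_one]
    exact (dvd_mul_left X _).mul_right _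
  | succ d ih =>
    rw [prodSeries_eq, nestedSeries, add_sub_add_left_eq_sub, ← mul_sub, pow_succ']
    exact mul_dvd_mul (dvd_mul_left X _) (ih _)

theorem coeff_pow_prodSeries_sub_one (d j : ℕ) (w : ℕ → R) (hj : j ≤ d + 1) :
    coeff (d + 1) ((prodSeries w - 1) ^ j) = ∑ u ∈ Nat.antidiagonalTuple d (d + 1 - j),
      (binomProd (d + 1) (Fin.cons j u) : R) * ∏ i : Fin (d + 1), w i ^ (Fin.cons j u : _) i := by
  set Y := C (w 0) * X * nestedSeries d (fun i => w (i + 1))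
  have hY : X ^ (d + 2) ∣ (prodSeries w - 1) - Y := by
    simpa [nestedSeries, Y, sub_add_eq_sub_sub] using
      X_pow_dvd_prodSeries_sub_nestedSeries (d + 1) w
  have hcoeff : coeff (d + 1) ((prodSeries w - 1) ^ j) = coeff (d + 1) (Y ^ j) := by
    rw [← sub_eq_zero, ← map_sub]
    exact X_pow_dvd_iff.1 (hY.trans (sub_dvd_pow_sub_pow _ _ j)) _ (by omega)
  rw [hcoeff, coeff_pow_C_mul_X_mul, if_pos hj, coeff_nestedSeries_pow, mul_sum]
  refine sum_congr rfl fun u _ => ?_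
  rw [Fin.prod_pow_cons]
  ring

end CommRing

/-- The left side is `(M + 1) [X^(M+1)] log (1 + B)`, and `L = B' / (1 + B)` is the derivative
of `log (1 + B)`; the geometric series `∑ (-B)ⁱ` stands in for `1 / (1 + B)`. -/
theorem sum_neg_one_pow_mul_coeff_pow {K : Type*} [Field K] [CharZero K] (B L : K⟦X⟧)
    (hB : X ∣ B) (hL : (1 + B) * L = d⁄dX K B) (M : ℕ) :
    ∑ j ∈ range (M + 2), (-1) ^ (1 + j) * (((M + 1 : ℕ) : K) / j) * coeff (M + 1) (B ^ j)
      = coeff M L := by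
  have hterm : ∀ i, (-1) ^ (1 + (i + 1)) * (((M + 1 : ℕ) : K) / (i + 1 : ℕ))
      * coeff (M + 1) (B ^ (i + 1)) = coeff M ((-B) ^ i * d⁄dX K B) := by
    intro i
    have hneg : (-B) ^ i * d⁄dX K B = C ((-1) ^ i) * (B ^ i * d⁄dX K B) := by
      rw [neg_pow, map_pow, map_neg, map_one, mul_assoc]
    have hi : ((i : K) + 1) ≠ 0 := Nat.cast_add_one_ne_zero i
    rw [hneg, coeff_C_mul]
    push_cast
    field_simp
    linear_combination (-1) ^ i * coeff_pow_succ_mul B i M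
  rw [sum_range_succ', Nat.cast_zero, div_zero, mul_zero, zero_mul, add_zero]
  simp_rw [hterm]
  rw [← map_sum, ← sum_mul, ← hL, ← mul_assoc, ← sub_neg_eq_add, geom_sum_mul_neg, sub_mul,
    one_mul, map_sub, sub_eq_self]
  exact X_pow_dvd_iff.1 ((pow_dvd_pow_of_dvd (dvd_neg.2 hB) _).mul_right L) M (by omega)

/-- `∏_{i<r} oddRatio i = C(2r,r)/2ʳ`, so `prodSeries oddRatio = (1 - 2X)^(-1/2)`. -/
def oddRatio (m : ℕ) : ℚ := (2 * ((m : ℚ) + 1) - 1) / ((m : ℚ) + 1)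

theorem coeff_succ_prodSeries_oddRatio_mul (r : ℕ) :
    coeff (r + 1) (prodSeries oddRatio) * (r + 1)
      = (2 * r + 1) * coeff r (prodSeries oddRatio) := by
  simp only [prodSeries, coeff_mk, prod_range_succ, oddRatio]
  field_simp
  ring

theorem one_sub_two_X_mul_derivative_prodSeries_oddRatio :
    (1 - C 2 * X) * d⁄dX ℚ (prodSeries oddRatio) = prodSeries oddRatio := by
  have ha := coeff_succ_prodSeries_oddRatio_mul
  ext (_ | r)
  · rw [sub_mul, one_mul, map_sub, mul_assoc, coeff_C_mul, coeff_zero_X_mul, coeff_derivative]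
    linear_combination ha 0
  · rw [sub_mul, one_mul, map_sub, mul_assoc, coeff_C_mul, coeff_succ_X_mul, coeff_derivative,
      coeff_derivative, ha, ha]
    push_cast
    linear_combination 2 * ha r

theorem rescale_two_mk_one_mul_one_sub_two_X : rescale (2 : ℚ) (mk 1) * (1 - C 2 * X) = 1 := by
  simpa [rescale_X] using congrArg (rescale (2 : ℚ)) (mk_one_mul_one_sub_eq_one ℚ)

theorem derivative_prodSeries_oddRatio :
    d⁄dX ℚ (prodSeries oddRatio) = prodSeries oddRatio * rescale 2 (mk 1) := by
  calc d⁄dX ℚ (prodSeries oddRatio)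
      = d⁄dX ℚ (prodSeries oddRatio) * (rescale 2 (mk 1) * (1 - C 2 * X)) := by
        rw [rescale_two_mk_one_mul_one_sub_two_X, mul_one]
    _ = (1 - C 2 * X) * d⁄dX ℚ (prodSeries oddRatio) * rescale 2 (mk 1) := by ring
    _ = prodSeries oddRatio * rescale 2 (mk 1) := by
        rw [one_sub_two_X_mul_derivative_prodSeries_oddRatio]

theorem sum_neg_one_pow_mul_coeff_pow_prodSeries_oddRatio_sub_one (M : ℕ) :
    ∑ j ∈ range (M + 2), (-1) ^ (1 + j) * (((M + 1 : ℕ) : ℚ) / j)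
      * coeff (M + 1) ((prodSeries oddRatio - 1) ^ j) = 2 ^ M := by
  have hX : X ∣ prodSeries oddRatio - 1 := by
    simpa [nestedSeries] using X_pow_dvd_prodSeries_sub_nestedSeries 0 oddRatio
  have hL : (1 + (prodSeries oddRatio - 1)) * rescale 2 (mk 1)
      = d⁄dX ℚ (prodSeries oddRatio - 1) := by
    rw [add_sub_cancel, map_sub, derivative_one, sub_zero, derivative_prodSeries_oddRatio]
  rw [sum_neg_one_pow_mul_coeff_pow _ _ hX hL, coeff_rescale, coeff_mk, Pi.one_apply, mul_one]

end PowerSeries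

open PowerSeries in
theorem stmt10 (n : ℕ) (hn : 0 < n) :
    ∑ t ∈ partitionTuples n,
      (-1 : ℚ) ^ (1 + t ⟨0, hn⟩) * (binomProd n t : ℚ) * ((n : ℚ) / (t ⟨0, hn⟩ : ℚ)) *
        ∏ i : Fin n, ((2 * ((i : ℕ) + 1) - 1 : ℚ) / ((i : ℕ) + 1 : ℚ)) ^ (t i)
      = 2 ^ (n - 1) := by
  obtain ⟨M, rfl⟩ : ∃ M, n = M + 1 := ⟨n - 1, by omega⟩
  rw [partitionTuples, sum_filter_of_ne fun t _ ht _ _ hij =>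
      antitone_of_binomProd_ne_zero (fun h => ht (by rw [h]; simp)) hij,
    Nat.sum_antidiagonalTuple_succ, Nat.sum_antidiagonal_eq_sum_range_succ_mk,
    add_tsub_cancel_right, ← sum_neg_one_pow_mul_coeff_pow_prodSeries_oddRatio_sub_one M]
  refine sum_congr rfl fun j hj => ?_
  rw [coeff_pow_prodSeries_sub_one M j oddRatio (Nat.lt_succ_iff.1 (mem_range.1 hj)), mul_sum]
  refine sum_congr rfl fun u _ => ?_
  rw [show (⟨0, hn⟩ : Fin (M + 1)) = 0 from rfl, Fin.cons_zero]
  simp only [oddRatio]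
  ring
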